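/- arXiv:0806.3417 — 2 statements merged into one kernel-verified Lean document; each statement's English description precedes it below -/
import Mathlib

section
/- (Logarithmic interpolation) Let (p, λ) ∈ [1,∞]², s ∈ ℝ, t ≥ 0, ε ∈ (0,1], and let u belong to L̃^λ_t(Ḃ^{s−ε}_{p,∞}) ∩ L̃^λ_t(Ḃ^s_{p,1}) ∩ L̃^λ_t(Ḃ^{s+ε}_{p,∞}). Then there is a constant C depending only on the dimension such that ‖u‖_{L̃^λ_t(Ḃ^s_{p,1})} ≤ C (‖u‖_{L̃^λ_t(Ḃ^s_{p,∞})} / ε) · log(e + (‖u‖_{L̃^λ_t(Ḃ^{s−ε}_{p,∞})} + ‖u‖_{L̃^λ_t(Ḃ^{s+ε}_{p,∞})}) / ‖u‖_{L̃^λ_t(Ḃ^s_{p,∞})}). -/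
open MeasureTheory ENNReal

noncomputable section

/-- Time-Lebesgue norm of a Littlewood–Paley block, `(∫₀^t F(q,τ)^λ dτ)^{1/λ}`
(essential supremum if `λ = ∞`), where `F q τ = ‖Δ_q u(τ)‖_{L^p}`. -/
def blockTimeNorm (t : ℝ) (lam : ℝ≥0∞) (F : ℤ → ℝ → ℝ≥0∞) (q : ℤ) : ℝ≥0∞ :=
  if lam = ∞ then essSup (F q) (volume.restrict (Set.Icc 0 t))
  else (∫⁻ τ in Set.Icc 0 t, (F q τ) ^ lam.toReal) ^ (1 / lam.toReal)

/-- The Chemin–Lerner norm `‖u‖_{L̃^λ_t(Ḃ^σ_{p,∞})} = sup_q 2^{qσ} ‖Δ_q u‖_{L^λ_t(L^p)}`. -/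
def clNormInfty (t : ℝ) (lam : ℝ≥0∞) (σ : ℝ) (F : ℤ → ℝ → ℝ≥0∞) : ℝ≥0∞ :=
  ⨆ q : ℤ, ENNReal.ofReal ((2:ℝ) ^ ((q : ℝ) * σ)) * blockTimeNorm t lam F q

/-- The Chemin–Lerner norm `‖u‖_{L̃^λ_t(Ḃ^σ_{p,1})} = ∑_q 2^{qσ} ‖Δ_q u‖_{L^λ_t(L^p)}`. -/
def clNormOne (t : ℝ) (lam : ℝ≥0∞) (σ : ℝ) (F : ℤ → ℝ → ℝ≥0∞) : ℝ≥0∞ :=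
  ∑' q : ℤ, ENNReal.ofReal ((2:ℝ) ^ ((q : ℝ) * σ)) * blockTimeNorm t lam F q

/-!
Write `c_q = 2^{qs} ‖Δ_q u‖_{L^λ_t(L^p)}`, `A = sup_q c_q` and `B` for the sum of the
`L̃^λ_t(Ḃ^{s∓ε}_{p,∞})` norms. Trading `2^{±qε}` for the weights of the neighbouring
regularities gives `c_q ≤ min (A, 2^{-|q|ε} B)`.
If `B ≤ 2^{Mε} A`, the `2M + 1` frequencies with `|q| ≤ M` contribute at most `(2M + 1) A` and
the others a geometric series bounded by `A / (1 - 2^{-ε}) ≤ 2A / ε`. The choice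
`M = ⌈2 log (e + B / A) / ε⌉` makes `B ≤ 2^{Mε} A` hold and costs only the logarithmic factor.
-/

lemma one_sub_two_rpow_neg_ge {ε : ℝ} (hε : 0 ≤ ε) (hε1 : ε ≤ 1) :
    ε / 2 ≤ 1 - (2 : ℝ) ^ (-ε) := by
  have h := rpow_one_add_le_one_add_mul_self (s := -(1 / 2)) (by norm_num) hε hε1
  rw [Real.rpow_neg zero_le_two, ← Real.inv_rpow zero_le_two]
  norm_num at h ⊢
  linarith

lemma inv_one_sub_two_rpow_neg_le {ε : ℝ} (hε : 0 < ε) (hε1 : ε ≤ 1) :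
    (1 - ENNReal.ofReal ((2 : ℝ) ^ (-ε)))⁻¹ ≤ ENNReal.ofReal (2 / ε) := by
  have hgap := one_sub_two_rpow_neg_ge hε.le hε1
  rw [← ENNReal.ofReal_one, ← ENNReal.ofReal_sub _ (by positivity),
    ← ENNReal.ofReal_inv_of_pos (by linarith)]
  refine ENNReal.ofReal_le_ofReal ?_
  calc (1 - (2 : ℝ) ^ (-ε))⁻¹ ≤ (ε / 2)⁻¹ := inv_anti₀ (by positivity) hgap
    _ = 2 / ε := inv_div _ _

lemma tsum_min_one_two_rpow_le {ε : ℝ} (hε : 0 < ε) (hε1 : ε ≤ 1) (M : ℕ) :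
    ∑' n : ℕ, min 1 (ENNReal.ofReal ((2 : ℝ) ^ (((M : ℝ) - n) * ε)))
      ≤ ENNReal.ofReal (M + 1 + 2 / ε) := by
  set r := ENNReal.ofReal ((2 : ℝ) ^ (-ε))
  rw [← ENNReal.summable.sum_add_tsum_nat_add' (k := M + 1)]
  have head : ∑ n ∈ Finset.range (M + 1),
      min 1 (ENNReal.ofReal ((2 : ℝ) ^ (((M : ℝ) - n) * ε))) ≤ M + 1 :=
    (Finset.sum_le_sum fun _ _ => min_le_left _ _).trans (by simp)
  have tail :
      ∑' k : ℕ, min 1 (ENNReal.ofReal ((2 : ℝ) ^ (((M : ℝ) - ↑(k + (M + 1))) * ε)))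
        ≤ ENNReal.ofReal (2 / ε) :=
    calc _ ≤ ∑' k : ℕ, r ^ (k + 1) := by
          refine ENNReal.tsum_le_tsum fun k => (min_le_right _ _).trans_eq ?_
          rw [← ENNReal.ofReal_pow (by positivity), ← Real.rpow_natCast,
            ← Real.rpow_mul zero_le_two]
          push_cast
          ring_nf
      _ = r * (1 - r)⁻¹ := ENNReal.tsum_geometric_add_one r
      _ ≤ (1 - r)⁻¹ := mul_le_of_le_one_left' <| ENNReal.ofReal_le_one.2 <|
          Real.rpow_le_one_of_one_le_of_nonpos one_le_two (by linarith)
      _ ≤ ENNReal.ofReal (2 / ε) := inv_one_sub_two_rpow_neg_le hε hε1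
  calc _ ≤ (M + 1 : ℝ≥0∞) + ENNReal.ofReal (2 / ε) := add_le_add head tail
    _ = ENNReal.ofReal (M + 1 + 2 / ε) := by
      rw [ENNReal.ofReal_add (by positivity) (by positivity)]
      norm_cast

lemma tsum_int_natAbs_le_two_mul {f : ℕ → ℝ≥0∞} (hf : Antitone f) :
    ∑' q : ℤ, f q.natAbs ≤ 2 * ∑' n, f n := by
  rw [tsum_of_nat_of_neg_add_one ENNReal.summable ENNReal.summable, two_mul]
  gcongr with n
  · simp
  · exact hf (by omega)

lemma ofReal_two_rpow_add (x y : ℝ) :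
    ENNReal.ofReal ((2 : ℝ) ^ (x + y)) = ENNReal.ofReal (2 ^ x) * ENNReal.ofReal (2 ^ y) := by
  rw [Real.rpow_add two_pos, ENNReal.ofReal_mul (by positivity)]

lemma exists_nat_le_two_rpow_mul {ε R : ℝ} (hε : 0 < ε) (hε1 : ε ≤ 1) (hR : 0 ≤ R) :
    ∃ M : ℕ, R ≤ 2 ^ ((M : ℝ) * ε) ∧
      2 * (M + 1 + 2 / ε) ≤ 12 * Real.log (Real.exp 1 + R) / ε := by
  set L := Real.log (Real.exp 1 + R)
  have hL : 1 ≤ L := by rw [Real.le_log_iff_exp_le (by positivity)]; linarith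
  set M := ⌈2 * L / ε⌉₊
  have hM_ge : 2 * L ≤ M * ε := (div_le_iff₀ hε).1 (Nat.le_ceil _)
  have hM_lt : M * ε < 2 * L + ε := by
    have := mul_lt_mul_of_pos_right (Nat.ceil_lt_add_one (by positivity : 0 ≤ 2 * L / ε)) hε
    rwa [add_mul, div_mul_cancel₀ _ hε.ne', one_mul] at this
  refine ⟨M, ?_, ?_⟩
  · calc R ≤ Real.exp 1 + R := by linarith [Real.exp_pos 1]
      _ = Real.exp L := (Real.exp_log (by positivity)).symm
      _ ≤ Real.exp (Real.log 2 * (M * ε)) :=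
          -- `log 2 > 1/2`, so `Mε ≥ 2L` suffices
          Real.exp_le_exp.2 (by nlinarith [Real.log_two_gt_d9])
      _ = 2 ^ ((M : ℝ) * ε) := (Real.rpow_def_of_pos two_pos _).symm
  · rw [le_div_iff₀ hε]
    have : 2 / ε * ε = 2 := div_mul_cancel₀ 2 hε.ne'
    nlinarith

section CheminLerner

variable {t : ℝ} {lam : ℝ≥0∞} {F : ℤ → ℝ → ℝ≥0∞}

lemma weighted_block_le_clNormInfty (σ : ℝ) (q : ℤ) :
    ENNReal.ofReal ((2 : ℝ) ^ ((q : ℝ) * σ)) * blockTimeNorm t lam F q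
      ≤ clNormInfty t lam σ F :=
  le_iSup (fun q : ℤ => ENNReal.ofReal ((2 : ℝ) ^ ((q : ℝ) * σ)) * blockTimeNorm t lam F q) q

lemma clNormInfty_le_clNormOne (σ : ℝ) : clNormInfty t lam σ F ≤ clNormOne t lam σ F :=
  iSup_le fun q => ENNReal.le_tsum q

lemma clNormOne_eq_zero_of_clNormInfty_eq_zero {σ : ℝ} (h : clNormInfty t lam σ F = 0) :
    clNormOne t lam σ F = 0 :=
  ENNReal.tsum_eq_zero.2 (iSup_eq_zero.1 h)

lemma weighted_block_le_clNormInfty_sub_add (s ε : ℝ) (q : ℤ) :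
    ENNReal.ofReal ((2 : ℝ) ^ ((q : ℝ) * s)) * blockTimeNorm t lam F q
      ≤ ENNReal.ofReal (2 ^ (-(q.natAbs * ε))) *
        (clNormInfty t lam (s - ε) F + clNormInfty t lam (s + ε) F) := by
  obtain ⟨n, rfl | rfl⟩ := q.eq_nat_or_neg
  · rw [Int.natAbs_natCast]
    calc _ = ENNReal.ofReal (2 ^ (-(n * ε))) *
          (ENNReal.ofReal (2 ^ ((n : ℝ) * (s + ε))) * blockTimeNorm t lam F n) := by
          rw [← mul_assoc, ← ofReal_two_rpow_add]; push_cast; ring_nf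
      _ ≤ _ := by
          gcongr
          exact (weighted_block_le_clNormInfty (s + ε) n).trans le_add_self
  · rw [Int.natAbs_neg, Int.natAbs_natCast]
    calc _ = ENNReal.ofReal (2 ^ (-(n * ε))) *
          (ENNReal.ofReal (2 ^ ((↑(-(n : ℤ)) : ℝ) * (s - ε))) *
            blockTimeNorm t lam F (-n)) := by
          rw [← mul_assoc, ← ofReal_two_rpow_add]; push_cast; ring_nf
      _ ≤ _ := by
          gcongr
          exact (weighted_block_le_clNormInfty (s - ε) (-n)).trans le_self_add

theorem clNormOne_le_of_clNormInfty_sub_add_le {s ε : ℝ} (hε : 0 < ε) (hε1 : ε ≤ 1)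
    {M : ℕ}
    (hM : clNormInfty t lam (s - ε) F + clNormInfty t lam (s + ε) F
      ≤ ENNReal.ofReal (2 ^ ((M : ℝ) * ε)) * clNormInfty t lam s F) :
    clNormOne t lam s F ≤ clNormInfty t lam s F * ENNReal.ofReal (2 * (M + 1 + 2 / ε)) := by
  set A := clNormInfty t lam s F
  have hpt (q : ℤ) : ENNReal.ofReal ((2 : ℝ) ^ ((q : ℝ) * s)) * blockTimeNorm t lam F q
      ≤ A * min 1 (ENNReal.ofReal (2 ^ (((M : ℝ) - q.natAbs) * ε))) := by
    rw [mul_min_of_nonneg _ _ zero_le, mul_one]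
    refine le_min (weighted_block_le_clNormInfty s q) ?_
    calc _ ≤ ENNReal.ofReal (2 ^ (-(q.natAbs * ε))) *
          (ENNReal.ofReal (2 ^ ((M : ℝ) * ε)) * A) :=
          (weighted_block_le_clNormInfty_sub_add s ε q).trans (by gcongr)
      _ = A * ENNReal.ofReal (2 ^ (((M : ℝ) - q.natAbs) * ε)) := by
          rw [← mul_assoc, ← ofReal_two_rpow_add, mul_comm]; ring_nf
  have hanti : Antitone fun n : ℕ => min 1 (ENNReal.ofReal (2 ^ (((M : ℝ) - n) * ε))) :=
    fun m n hmn => by dsimp only; gcongr; exact one_le_two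
  calc clNormOne t lam s F
      ≤ ∑' q : ℤ, A * min 1 (ENNReal.ofReal (2 ^ (((M : ℝ) - q.natAbs) * ε))) :=
        ENNReal.tsum_le_tsum hpt
    _ = A * ∑' q : ℤ, min 1 (ENNReal.ofReal (2 ^ (((M : ℝ) - q.natAbs) * ε))) :=
        ENNReal.tsum_mul_left
    _ ≤ A * (2 * ENNReal.ofReal (M + 1 + 2 / ε)) := by
        gcongr
        refine (tsum_int_natAbs_le_two_mul hanti).trans ?_
        gcongr
        exact tsum_min_one_two_rpow_le hε hε1 M
    _ = A * ENNReal.ofReal (2 * (M + 1 + 2 / ε)) := by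
        rw [ENNReal.ofReal_mul zero_le_two, ENNReal.ofReal_ofNat]

end CheminLerner

/-- **Logarithmic interpolation.**
Let `p, λ ∈ [1,∞]`, `s ∈ ℝ`, `t ≥ 0`, `ε ∈ (0,1]`, and let `u` belong to
`L̃^λ_t(Ḃ^{s−ε}_{p,∞}) ∩ L̃^λ_t(Ḃ^s_{p,1}) ∩ L̃^λ_t(Ḃ^{s+ε}_{p,∞})` (finiteness of the
corresponding norms of the blocks `F q τ = ‖Δ_q u(τ)‖_{L^p}`).  Then there is a constant
`C` depending only on the dimension (here: absolute) such that
`‖u‖_{L̃^λ_t(Ḃ^s_{p,1})} ≤ C (‖u‖_{L̃^λ_t(Ḃ^s_{p,∞})}/ε) · log(e +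
(‖u‖_{L̃^λ_t(Ḃ^{s−ε}_{p,∞})} + ‖u‖_{L̃^λ_t(Ḃ^{s+ε}_{p,∞})}) / ‖u‖_{L̃^λ_t(Ḃ^s_{p,∞})})`. -/
theorem logarithmic_interpolation :
    ∃ C : ℝ, 0 < C ∧
      ∀ (N : ℕ) (p lam : ℝ≥0∞), 1 ≤ p → 1 ≤ lam →
      ∀ (s : ℝ) (t : ℝ), 0 ≤ t →
      ∀ ε : ℝ, 0 < ε → ε ≤ 1 →
      ∀ (u : ℝ → EuclideanSpace ℝ (Fin N) → ℂ)
        (Δ : ℤ → (EuclideanSpace ℝ (Fin N) → ℂ) → EuclideanSpace ℝ (Fin N) → ℂ)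
        (F : ℤ → ℝ → ℝ≥0∞),
        (∀ q τ, F q τ = eLpNorm (Δ q (u τ)) p volume) →
        clNormInfty t lam (s - ε) F ≠ ∞ →
        clNormOne t lam s F ≠ ∞ →
        clNormInfty t lam (s + ε) F ≠ ∞ →
        (clNormOne t lam s F).toReal
          ≤ C * ((clNormInfty t lam s F).toReal / ε) *
              Real.log (Real.exp 1 +
                ((clNormInfty t lam (s - ε) F).toReal
                  + (clNormInfty t lam (s + ε) F).toReal)
                / (clNormInfty t lam s F).toReal) := by
  refine ⟨12, by norm_num, ?_⟩
  intro _ _ lam _ _ s t _ ε hε hε1 _ _ F _ hAm hS hAp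
  set A := clNormInfty t lam s F
  set B := clNormInfty t lam (s - ε) F + clNormInfty t lam (s + ε) F
  have hA : A ≠ ∞ := ne_top_of_le_ne_top hS (clNormInfty_le_clNormOne s)
  rcases eq_or_ne A 0 with hA0 | hA0
  · simp [clNormOne_eq_zero_of_clNormInfty_eq_zero hA0, hA0]
  obtain ⟨M, hRM, hML⟩ := exists_nat_le_two_rpow_mul hε hε1
    (R := B.toReal / A.toReal) (by positivity)
  have hBM : B ≤ ENNReal.ofReal (2 ^ ((M : ℝ) * ε)) * A := by
    rw [← ENNReal.toReal_le_toReal (ENNReal.add_ne_top.2 ⟨hAm, hAp⟩)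
      (ENNReal.mul_ne_top ENNReal.ofReal_ne_top hA), ENNReal.toReal_mul,
      ENNReal.toReal_ofReal (by positivity)]
    rwa [div_le_iff₀ (ENNReal.toReal_pos hA0 hA)] at hRM
  calc (clNormOne t lam s F).toReal
      ≤ (A * ENNReal.ofReal (2 * (M + 1 + 2 / ε))).toReal :=
        ENNReal.toReal_mono (ENNReal.mul_ne_top hA ENNReal.ofReal_ne_top)
          (clNormOne_le_of_clNormInfty_sub_add_le hε hε1 hBM)
    _ = A.toReal * (2 * (M + 1 + 2 / ε)) := by
        rw [ENNReal.toReal_mul, ENNReal.toReal_ofReal (by positivity)]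
    _ ≤ A.toReal * (12 * Real.log (Real.exp 1 + B.toReal / A.toReal) / ε) := by gcongr
    _ = _ := by rw [ENNReal.toReal_add hAm hAp]; ring
end
end

section
/- (ℓ¹–ℓ∞ logarithmic summation lemma) Let (c_q)_{q∈ℤ} be a sequence of nonnegative reals, let ε ∈ (0,1], and suppose A₀ := sup_q c_q, A₋ := sup_q 2^{−εq} c_q and A₊ := sup_q 2^{εq} c_q are all finite with A₀ > 0. Then ∑_{q∈ℤ} c_q ≤ C (A₀/ε) log(e + (A₋ + A₊)/A₀) for an absolute constant C. -/
/-! Since `c q ≤ min A₀ (Ap 2^{-εq}) (Am 2^{εq})`, the terms with `-M ≤ q < M` contribute at most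
`2M A₀`, while the two tails are dominated by geometric series of ratio `r = 2^{-ε}` and contribute
at most `(Ap + Am) r^M / (1 - r)`. Convexity of `ε ↦ 2^{-ε}` gives `1 - r ≥ ε/2`, and taking
`M = ⌈log₂ y / ε⌉` with `y = e + (Am + Ap)/A₀` makes the tails at most `2A₀/ε` while
`2M A₀ ≤ 2A₀ (log₂ y + ε)/ε ≲ (A₀/ε) log y`. -/

open Real

lemma tsum_le_mul_add_geometric_tail {d : ℕ → ℝ} {A B r : ℝ} (hd : ∀ n, 0 ≤ d n)
    (hA : ∀ n, d n ≤ A) (hB : ∀ n, d n ≤ B * r ^ n) (hr₀ : 0 ≤ r) (hr₁ : r < 1) (M : ℕ) :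
    Summable d ∧ ∑' n, d n ≤ M * A + B * r ^ M / (1 - r) := by
  have hgeom : Summable fun n ↦ r ^ n := summable_geometric_of_lt_one hr₀ hr₁
  have hsum : Summable d := .of_nonneg_of_le hd hB (hgeom.mul_left B)
  refine ⟨hsum, ?_⟩
  have hhead : ∑ n ∈ Finset.range M, d n ≤ M * A := by
    simpa using Finset.sum_le_card_nsmul (Finset.range M) d A fun n _ ↦ hA n
  have htail : ∑' n, d (n + M) ≤ B * r ^ M / (1 - r) :=
    calc ∑' n, d (n + M) ≤ ∑' n, B * r ^ M * r ^ n :=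
          ((summable_nat_add_iff M).2 hsum).tsum_le_tsum
            (fun n ↦ (hB (n + M)).trans_eq (by ring)) (hgeom.mul_left _)
      _ = B * r ^ M / (1 - r) := by
          rw [tsum_mul_left, tsum_geometric_of_lt_one hr₀ hr₁, div_eq_mul_inv]
  rw [← hsum.sum_add_tsum_nat_add M]
  exact add_le_add hhead htail

lemma tsum_int_le_mul_add_geometric_tail {c : ℤ → ℝ} {A Bp Bm r : ℝ} (hc : ∀ q, 0 ≤ c q)
    (hA : ∀ q, c q ≤ A) (hBp : ∀ n : ℕ, c n ≤ Bp * r ^ n)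
    (hBm : ∀ n : ℕ, c (-(n + 1)) ≤ Bm * r ^ n) (hr₀ : 0 ≤ r) (hr₁ : r < 1) (M : ℕ) :
    ∑' q, c q ≤ 2 * M * A + (Bp + Bm) * r ^ M / (1 - r) := by
  obtain ⟨hsp, hp⟩ := tsum_le_mul_add_geometric_tail (fun n ↦ hc n) (fun n ↦ hA n) hBp hr₀ hr₁ M
  obtain ⟨hsm, hm⟩ := tsum_le_mul_add_geometric_tail (fun n ↦ hc (-(n + 1)))
    (fun n ↦ hA (-(n + 1))) hBm hr₀ hr₁ M
  rw [tsum_of_nat_of_neg_add_one hsp hsm, add_mul, add_div]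
  linarith

lemma half_le_one_sub_two_rpow_neg {ε : ℝ} (hε₀ : 0 ≤ ε) (hε₁ : ε ≤ 1) :
    ε / 2 ≤ 1 - (2 : ℝ) ^ (-ε) := by
  have := rpow_one_add_le_one_add_mul_self (s := -1 / 2) (by norm_num) hε₀ hε₁
  rw [rpow_neg zero_le_two, ← inv_rpow zero_le_two]
  norm_num at this ⊢
  linarith

lemma two_rpow_neg_pow (ε : ℝ) (n : ℕ) : ((2 : ℝ) ^ (-ε)) ^ n = (2 : ℝ) ^ (-(ε * n)) := by
  rw [← rpow_natCast, ← rpow_mul zero_le_two, neg_mul]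

lemma le_mul_rpow_neg_of_rpow_mul_le {x a b B : ℝ} (hx : 0 < x) (h : x ^ a * b ≤ B) :
    b ≤ B * x ^ (-a) := by
  rwa [rpow_neg hx.le, ← div_eq_mul_inv, le_div_iff₀' (rpow_pos_of_pos hx a)]

lemma le_mul_two_rpow_neg_pow_of_two_rpow_mul_le {c : ℤ → ℝ} {ε B : ℝ}
    (h : ∀ q : ℤ, (2 : ℝ) ^ (ε * q) * c q ≤ B) (n : ℕ) : c n ≤ B * ((2 : ℝ) ^ (-ε)) ^ n := by
  rw [two_rpow_neg_pow]
  exact le_mul_rpow_neg_of_rpow_mul_le two_pos (mod_cast h n)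

lemma le_mul_two_rpow_neg_pow_of_two_rpow_neg_mul_le {c : ℤ → ℝ} {ε B : ℝ} (hε : 0 ≤ ε)
    (h : ∀ q : ℤ, (2 : ℝ) ^ (-(ε * q)) * c q ≤ B) (hc : ∀ q, 0 ≤ c q) (n : ℕ) :
    c (-(n + 1)) ≤ B * ((2 : ℝ) ^ (-ε)) ^ n := by
  rw [two_rpow_neg_pow]
  refine le_mul_rpow_neg_of_rpow_mul_le two_pos ((h (-(n + 1))).trans' ?_)
  gcongr
  · exact hc _
  · norm_num
  · push_cast
    nlinarith

lemma exists_nat_two_rpow_neg_pow_mul_le_one {ε y : ℝ} (hε : 0 < ε) (hy : 1 ≤ y) :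
    ∃ M : ℕ, ((2 : ℝ) ^ (-ε)) ^ M * y ≤ 1 ∧ ε * M ≤ logb 2 y + ε := by
  have hlogb : 0 ≤ logb 2 y / ε := div_nonneg (logb_nonneg one_lt_two hy) hε.le
  refine ⟨⌈logb 2 y / ε⌉₊, ?_, ?_⟩
  · have hM : logb 2 y ≤ ε * ⌈logb 2 y / ε⌉₊ := (div_le_iff₀' hε).1 (Nat.le_ceil _)
    calc ((2 : ℝ) ^ (-ε)) ^ ⌈logb 2 y / ε⌉₊ * y ≤ (2 : ℝ) ^ (-logb 2 y) * y := by
          rw [two_rpow_neg_pow]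
          gcongr
          norm_num
      _ = 1 := by
          rw [rpow_neg zero_le_two, rpow_logb two_pos (by norm_num) (by linarith),
            inv_mul_cancel₀ (by linarith)]
  · calc ε * ⌈logb 2 y / ε⌉₊ ≤ ε * (logb 2 y / ε + 1) := by
          gcongr
          exact (Nat.ceil_lt_add_one hlogb).le
      _ = logb 2 y + ε := by field_simp

lemma logb_two_le_three_halves_mul_log {y : ℝ} (hy : 1 ≤ y) : logb 2 y ≤ 3 / 2 * log y := by
  rw [logb, div_le_iff₀ (log_pos one_lt_two)]
  nlinarith [log_nonneg hy, log_two_gt_d9]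

/-- **ℓ¹–ℓ∞ logarithmic summation lemma.**
There is an absolute constant `C > 0` such that: for any sequence `(c_q)_{q∈ℤ}` of
nonnegative reals, any `ε ∈ (0,1]`, and any finite bounds `A₀ > 0`, `A₋`, `A₊` with
`c_q ≤ A₀`, `2^{−εq} c_q ≤ A₋` and `2^{εq} c_q ≤ A₊` for all `q` (i.e. `A₀, A₋, A₊`
dominate `sup_q c_q`, `sup_q 2^{−εq} c_q`, `sup_q 2^{εq} c_q` respectively), one has
`∑_{q∈ℤ} c_q ≤ C (A₀/ε) log(e + (A₋ + A₊)/A₀)`. -/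
theorem ell_one_ell_infty_log_lemma :
    ∃ C : ℝ, 0 < C ∧
      ∀ (c : ℤ → ℝ) (ε A₀ Am Ap : ℝ),
        (∀ q, 0 ≤ c q) → 0 < ε → ε ≤ 1 → 0 < A₀ →
        (∀ q : ℤ, c q ≤ A₀) →
        (∀ q : ℤ, (2:ℝ) ^ (-(ε * (q:ℝ))) * c q ≤ Am) →
        (∀ q : ℤ, (2:ℝ) ^ (ε * (q:ℝ)) * c q ≤ Ap) →
        ∑' q : ℤ, c q ≤ C * (A₀ / ε) * Real.log (Real.exp 1 + (Am + Ap) / A₀) := by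
  refine ⟨7, by norm_num, fun c ε A₀ Am Ap hc hε hε₁ hA₀ hc₀ hcm hcp ↦ ?_⟩
  set r : ℝ := (2 : ℝ) ^ (-ε)
  set y := exp 1 + (Am + Ap) / A₀
  have hAm : 0 ≤ Am := (hc 0).trans (by simpa using hcm 0)
  have hAp : 0 ≤ Ap := (hc 0).trans (by simpa using hcp 0)
  have hey : exp 1 ≤ y := le_add_of_nonneg_right (by positivity)
  have hy : 1 ≤ y := (one_le_exp zero_le_one).trans hey
  have hr : ε / 2 ≤ 1 - r := half_le_one_sub_two_rpow_neg hε.le hε₁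
  obtain ⟨M, hMy, hMε⟩ := exists_nat_two_rpow_neg_pow_mul_le_one hε hy
  have hsum := tsum_int_le_mul_add_geometric_tail hc hc₀
    (le_mul_two_rpow_neg_pow_of_two_rpow_mul_le hcp)
    (le_mul_two_rpow_neg_pow_of_two_rpow_neg_mul_le hε.le hcm hc) (by positivity) (by linarith) M
  have htail : (Ap + Am) * r ^ M ≤ A₀ :=
    calc (Ap + Am) * r ^ M ≤ A₀ * y * r ^ M := by
          gcongr
          rw [mul_add, mul_div_cancel₀ _ hA₀.ne']
          linarith [mul_pos hA₀ (exp_pos 1)]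
      _ ≤ A₀ := by
          rw [mul_assoc, mul_comm y]
          exact mul_le_of_le_one_right hA₀.le hMy
  have hlog := logb_two_le_three_halves_mul_log hy
  have hlog₁ : 1 ≤ log y := (le_log_iff_exp_le (by positivity)).2 hey
  calc ∑' q, c q ≤ 2 * M * A₀ + (Ap + Am) * r ^ M / (1 - r) := hsum
    _ ≤ 2 * M * A₀ + A₀ / (ε / 2) := by gcongr
    _ ≤ 7 * (A₀ / ε) * log y := by
        field_simp
        linarith
end
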